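/- arXiv:1712.04329 — 3 statements merged into one kernel-verified Lean document; each statement's English description precedes it below -/
import Mathlib

section
/- Let H be a complex Hilbert space and let P₁, P₂ : H → H be continuous linear operators that are symmetric. If f ∈ H satisfies equality in the uncertainty inequality, |⟪f, (P₁P₂ − P₂P₁) f⟫| = 2 ‖P₁ f‖ ‖P₂ f‖, and P₂ f ≠ 0, then there exists a real number λ such that P₁ f = i λ • (P₂ f); that is, minimizers of the uncertainty principle are exactly the coherent states. -/
/-!
By symmetry, `⟪f, [P₁, P₂] f⟫ = conj z - z` with `z = ⟪P₂ f, P₁ f⟫`, so equality says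
`|Im z| = ‖P₂ f‖ ‖P₁ f‖`. Together with `|Im z| ≤ |z| ≤ ‖P₂ f‖ ‖P₁ f‖` (Cauchy–Schwarz) this forces
`Re z = 0` and equality in Cauchy–Schwarz, i.e. `P₁ f = c • P₂ f`; then
`Re z = Re c * ‖P₂ f‖²` gives `Re c = 0`.
-/

open scoped ComplexInnerProductSpace

theorem ContinuousLinearMap.inner_commutator_apply_self {𝕜 E : Type*} [RCLike 𝕜]
    [NormedAddCommGroup E] [InnerProductSpace 𝕜 E] {A B : E →L[𝕜] E}
    (hA : (A : E →ₗ[𝕜] E).IsSymmetric) (hB : (B : E →ₗ[𝕜] E).IsSymmetric) (x : E) :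
    inner 𝕜 x ((A.comp B - B.comp A) x) = inner 𝕜 (A x) (B x) - inner 𝕜 (B x) (A x) := by
  rw [sub_apply, inner_sub_right, comp_apply, comp_apply, ← coe_coe A, ← coe_coe B,
    ← hA x, ← hB x]

theorem Complex.norm_conj_sub (z : ℂ) : ‖(starRingEnd ℂ) z - z‖ = 2 * |z.im| := by
  rw [← norm_neg, neg_sub, Complex.sub_conj]
  simp

theorem exists_eq_I_mul_smul_of_abs_im_inner_eq {E : Type*} [NormedAddCommGroup E]
    [InnerProductSpace ℂ E] {x y : E} (hy : y ≠ 0) (h : |(⟪y, x⟫).im| = ‖y‖ * ‖x‖) :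
    ∃ lam : ℝ, x = (Complex.I * lam) • y := by
  have hnorm : ‖⟪y, x⟫‖ = ‖y‖ * ‖x‖ :=
    le_antisymm (norm_inner_le_norm y x) (h ▸ Complex.abs_im_le_norm _)
  have hre : (⟪y, x⟫).re = 0 := Complex.abs_im_eq_norm.1 (h.trans hnorm.symm)
  have hdep : y = 0 ∨ ∃ c : ℂ, x = c • y := ((norm_inner_eq_norm_tfae ℂ y x).out 0 2).1 hnorm
  obtain ⟨c, rfl⟩ := hdep.resolve_left hy
  have hc : c.re = 0 := by
    rw [inner_smul_right, inner_self_eq_norm_sq_to_K, ← RCLike.ofReal_pow,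
      RCLike.ofReal_eq_complex_ofReal, Complex.re_mul_ofReal, mul_eq_zero] at hre
    exact hre.resolve_right (by positivity)
  refine ⟨c.im, ?_⟩
  congr 1
  apply Complex.ext <;> simp [hc]

theorem equality_implies_coherent_state_general
    {H : Type*} [NormedAddCommGroup H] [InnerProductSpace ℂ H]
    (P₁ P₂ : H →L[ℂ] H)
    (h₁ : ∀ f g : H, ⟪P₁ f, g⟫ = ⟪f, P₁ g⟫)
    (h₂ : ∀ f g : H, ⟪P₂ f, g⟫ = ⟪f, P₂ g⟫)
    (f : H)
    (heq : ‖⟪f, (P₁.comp P₂ - P₂.comp P₁) f⟫‖ = 2 * ‖P₁ f‖ * ‖P₂ f‖)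
    (hne : P₂ f ≠ 0) :
    ∃ lam : ℝ, P₁ f = (Complex.I * (lam : ℂ)) • (P₂ f) := by
  rw [ContinuousLinearMap.inner_commutator_apply_self h₁ h₂, ← inner_conj_symm (P₁ f) (P₂ f),
    Complex.norm_conj_sub, mul_assoc, mul_comm ‖P₁ f‖] at heq
  exact exists_eq_I_mul_smul_of_abs_im_inner_eq hne (mul_left_cancel₀ two_ne_zero heq)

/-- Minimizers of the uncertainty principle are coherent states: if equality
`|⟪f, (P₁P₂ − P₂P₁) f⟫| = 2 ‖P₁ f‖ ‖P₂ f‖` holds and `P₂ f ≠ 0`, then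
`P₁ f = iλ • (P₂ f)` for some real `λ`. -/
theorem equality_implies_coherent_state
    {H : Type*} [NormedAddCommGroup H] [InnerProductSpace ℂ H] [CompleteSpace H]
    (P₁ P₂ : H →L[ℂ] H)
    (h₁ : ∀ f g : H, ⟪P₁ f, g⟫ = ⟪f, P₁ g⟫)
    (h₂ : ∀ f g : H, ⟪P₂ f, g⟫ = ⟪f, P₂ g⟫)
    (f : H)
    (heq : ‖⟪f, (P₁.comp P₂ - P₂.comp P₁) f⟫‖ = 2 * ‖P₁ f‖ * ‖P₂ f‖)
    (hne : P₂ f ≠ 0) :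
    ∃ lam : ℝ, P₁ f = (Complex.I * (lam : ℂ)) • (P₂ f) :=
  equality_implies_coherent_state_general P₁ P₂ h₁ h₂ f heq hne
end

section
/- On ℝ⁴ with coordinates (x,y,θ,σ), the vector fields X₁(x,y,θ,σ) = e^σ(cos θ, sin θ, 0, 0), X₂ = (0,0,1,0), X₄ = (0,0,0,1) together with the Lie bracket [X₁,X₂] satisfy Hörmander's condition: at every point p ∈ ℝ⁴, the real linear span of the four vectors X₁(p), X₂(p), X₄(p), and [X₁,X₂](p) is all of ℝ⁴. -/
/-- The Lie bracket of two vector fields on ℝ⁴: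
`[V,W](p) = DW(p)·V(p) − DV(p)·W(p)`. -/
noncomputable def lieBracket (V W : (Fin 4 → ℝ) → (Fin 4 → ℝ)) :
    (Fin 4 → ℝ) → (Fin 4 → ℝ) :=
  fun p => fderiv ℝ W p (V p) - fderiv ℝ V p (W p)

/-- `X₁(x,y,θ,σ) = e^σ (cos θ, sin θ, 0, 0)`, coordinates `(x,y,θ,σ) = (p 0, p 1, p 2, p 3)`. -/
noncomputable def X₁ : (Fin 4 → ℝ) → (Fin 4 → ℝ) :=
  fun p => ![Real.exp (p 3) * Real.cos (p 2), Real.exp (p 3) * Real.sin (p 2), 0, 0]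

/-- `X₂ = ∂_θ`. -/
noncomputable def X₂ : (Fin 4 → ℝ) → (Fin 4 → ℝ) :=
  fun _ => ![0, 0, 1, 0]

/-- `X₄ = ∂_σ`. -/
noncomputable def X₄ : (Fin 4 → ℝ) → (Fin 4 → ℝ) :=
  fun _ => ![0, 0, 0, 1]

/-!
Since `X₂` is constant, `[X₁, X₂] = -∂_θ X₁ = e^σ (sin θ, -cos θ, 0, 0)`: the bracket is `X₁` turned
by a right angle in the `(x, y)`-plane. So `X₁, X₂, X₄, [X₁, X₂]` are, up to order, the columns of a
matrix with determinant `-e^{2σ} (cos² θ + sin² θ) = -e^{2σ} ≠ 0`.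
-/

theorem lieBracket_const_right (V : (Fin 4 → ℝ) → (Fin 4 → ℝ)) (w p : Fin 4 → ℝ) :
    lieBracket V (fun _ => w) p = -fderiv ℝ V p w := by
  simp [lieBracket]

theorem fderiv_X₁_apply (p v : Fin 4 → ℝ) :
    fderiv ℝ X₁ p v =
      ![Real.exp (p 3) * (v 3 * Real.cos (p 2) - v 2 * Real.sin (p 2)),
        Real.exp (p 3) * (v 3 * Real.sin (p 2) + v 2 * Real.cos (p 2)), 0, 0] := by
  have hθ := hasFDerivAt_apply (𝕜 := ℝ) (2 : Fin 4) p
  have hσ := hasFDerivAt_apply (𝕜 := ℝ) (3 : Fin 4) p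
  unfold X₁
  rw [fderiv_pi (fun i => by fin_cases i <;> simp <;> fun_prop)]
  ext i
  fin_cases i
  · simp [(hσ.exp.fun_mul hθ.cos).fderiv]; ring
  · simp [(hσ.exp.fun_mul hθ.sin).fderiv]; ring
  · simp
  · simp

theorem lieBracket_X₁_X₂ (p : Fin 4 → ℝ) :
    lieBracket X₁ X₂ p =
      ![Real.exp (p 3) * Real.sin (p 2), -(Real.exp (p 3) * Real.cos (p 2)), 0, 0] := by
  unfold X₂
  rw [lieBracket_const_right, fderiv_X₁_apply]
  ext i
  fin_cases i <;> simp

theorem span_rotated_frame_eq_top {K : Type*} [Field K] {r c s : K} (hr : r ≠ 0)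
    (hcs : c ^ 2 + s ^ 2 ≠ 0) :
    Submodule.span K {![r * c, r * s, 0, 0], ![0, 0, 1, 0], ![0, 0, 0, 1], ![r * s, -(r * c), 0, 0]}
      = ⊤ := by
  have hdet : r ^ 2 * (c ^ 2 + s ^ 2) ≠ 0 := mul_ne_zero (pow_ne_zero 2 hr) hcs
  have hbasis := ((Pi.basisFun K (Fin 4)).is_basis_iff_det
    (v := ![![r * c, r * s, 0, 0], ![0, 0, 1, 0], ![0, 0, 0, 1], ![r * s, -(r * c), 0, 0]])).2 <| by
    rw [Module.Basis.det_apply, isUnit_iff_ne_zero]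
    convert neg_ne_zero.2 hdet using 1
    simp [Matrix.det_succ_row_zero, Fin.sum_univ_succ, Fin.succAbove, Module.Basis.toMatrix]
    ring
  simpa only [Matrix.range_cons, Matrix.range_empty, Set.union_empty, Set.singleton_union]
    using hbasis.2

/-- **Hörmander condition**: at every point `p`, the vectors
`X₁(p), X₂(p), X₄(p), [X₁,X₂](p)` span all of ℝ⁴. -/
theorem hormander_condition (p : Fin 4 → ℝ) :
    Submodule.span ℝ {X₁ p, X₂ p, X₄ p, lieBracket X₁ X₂ p} = ⊤ := by
  rw [lieBracket_X₁_X₂]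
  exact span_rotated_frame_eq_top (Real.exp_pos (p 3)).ne'
    (by rw [Real.cos_sq_add_sin_sq]; exact one_ne_zero)
end

section
/- Let Ψ₀ : ℝ² → ℂ be the Gabor mother function Ψ₀(ξ,η) = e^{−(ξ²+η²)} e^{2iη}. Then Ψ₀ satisfies the coherent-state (minimal uncertainty) equation Y₁Ψ₀ = i λ Y₂Ψ₀ with λ = −1; that is, for every (ξ,η) ∈ ℝ², ∂_ξ Ψ₀(ξ,η) = −i · (η ∂_ξ Ψ₀(ξ,η) − ξ ∂_η Ψ₀(ξ,η)). -/
/-!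
`Ψ₀` is the exponential of a quadratic polynomial in each variable, so its partial derivatives are
`∂_ξ Ψ₀ = -2ξ Ψ₀` and `∂_η Ψ₀ = (2i - 2η) Ψ₀`. The terms `±2ξη` cancel in
`η ∂_ξ Ψ₀ - ξ ∂_η Ψ₀ = -2iξ Ψ₀`, and `-i · (-2iξ) = -2ξ`.
-/

noncomputable def Ψ₀ (ξ η : ℝ) : ℂ :=
  Complex.exp (-((ξ : ℂ)^2 + (η : ℂ)^2)) * Complex.exp (2 * (η : ℂ) * Complex.I)

open Complex

theorem hasDerivAt_cexp_quadratic (a b c : ℂ) (x : ℝ) :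
    HasDerivAt (fun t : ℝ => cexp (a * t ^ 2 + b * t + c))
      ((2 * a * x + b) * cexp (a * x ^ 2 + b * x + c)) x := by
  have hpoly : HasDerivAt (fun z : ℂ => a * z ^ 2 + b * z + c) (2 * a * x + b) x :=
    (((hasDerivAt_pow 2 (x : ℂ)).const_mul a).fun_add
      ((hasDerivAt_id' (x : ℂ)).const_mul b)).add_const c |>.congr_deriv (by push_cast; ring)
  rw [mul_comm]
  exact hpoly.cexp.comp_ofReal

theorem Ψ₀_eq_cexp_quadratic_fst (ξ η : ℝ) :
    Ψ₀ ξ η = cexp (-1 * (ξ : ℂ) ^ 2 + 0 * ξ + (2 * η * I - η ^ 2)) := by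
  rw [Ψ₀, ← Complex.exp_add]
  ring_nf

theorem Ψ₀_eq_cexp_quadratic_snd (ξ η : ℝ) :
    Ψ₀ ξ η = cexp (-1 * (η : ℂ) ^ 2 + 2 * I * η + -ξ ^ 2) := by
  rw [Ψ₀, ← Complex.exp_add]
  ring_nf

theorem hasDerivAt_Ψ₀_fst (ξ η : ℝ) :
    HasDerivAt (fun t : ℝ => Ψ₀ t η) (-2 * ξ * Ψ₀ ξ η) ξ := by
  convert hasDerivAt_cexp_quadratic (-1) 0 (2 * η * I - η ^ 2) ξ using 1
  · exact funext fun t => Ψ₀_eq_cexp_quadratic_fst t η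
  · rw [← Ψ₀_eq_cexp_quadratic_fst]
    ring

theorem hasDerivAt_Ψ₀_snd (ξ η : ℝ) :
    HasDerivAt (fun t : ℝ => Ψ₀ ξ t) ((-2 * η + 2 * I) * Ψ₀ ξ η) η := by
  convert hasDerivAt_cexp_quadratic (-1) (2 * I) (-ξ ^ 2) η using 1
  · exact funext fun t => Ψ₀_eq_cexp_quadratic_snd ξ t
  · rw [← Ψ₀_eq_cexp_quadratic_snd]
    ring

/-- The Gabor mother function satisfies the coherent-state (minimal uncertainty) equation
`Y₁ Ψ₀ = iλ Y₂ Ψ₀` with `λ = −1`: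
`∂_ξ Ψ₀ = −i (η ∂_ξ Ψ₀ − ξ ∂_η Ψ₀)`. -/
theorem Ψ₀_coherent_state (ξ η : ℝ) :
    deriv (fun t : ℝ => Ψ₀ t η) ξ
      = -Complex.I *
        ((η : ℂ) * deriv (fun t : ℝ => Ψ₀ t η) ξ - (ξ : ℂ) * deriv (fun t : ℝ => Ψ₀ ξ t) η) := by
  rw [(hasDerivAt_Ψ₀_fst ξ η).deriv, (hasDerivAt_Ψ₀_snd ξ η).deriv]
  linear_combination (-2 * ξ * Ψ₀ ξ η) * I_sq
end
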